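/- Let Φ' be the two-group (interchangeable-robot) version of the MPP instance reduced from a 3SAT instance (X, C) with n variables and m clauses (as described in the context), where the variable robots {r_{x_1}, …, r_{x_n}} form one group with goal set {v_{x_1}^g, …, v_{x_n}^g} and the clause robots {r_{c_1}, …, r_{c_m}} form another group with goal set {v_{c_1}^g, …, v_{c_m}^g}. Then Φ' admits a solution with makespan at most m+2 if and only if (X, C) is satisfiable, and Φ' admits a solution with total arrival time at most (n+m)(m+2) if and only if (X, C) is satisfiable. -/

import Mathlib

/-!
Formalization of multi-robot path planning on graphs (MPP).

An MPP instance consists of a connected simple graph `G` on a vertex type `V`,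
a finite set of robots (an index type `R`), and injective start/goal
configurations `xI xG : R → V`.  A scheduled path is a map `ℕ → V`.
-/

namespace MPPFormal

variable {V R : Type}

/-- The arrival time of a path `p` with goal `g`: the smallest time `t`
with `p t = g`. -/
noncomputable def arrivalTime (g : V) (p : ℕ → V) : ℕ := sInf {t | p t = g}

/-- A feasible scheduled path from `s` to `g` in the graph `G`:
it starts at `s`, reaches `g` at some time, stays at `g` forever after the
first time it reaches `g`, and at every time step it either traverses an
edge of `G` or stays put. -/
def FeasiblePath (G : SimpleGraph V) (s g : V) (p : ℕ → V) : Prop :=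
  p 0 = s ∧ (∃ t, p t = g) ∧ (∀ t, arrivalTime g p ≤ t → p t = g) ∧
    ∀ t, G.Adj (p t) (p (t + 1)) ∨ p t = p (t + 1)

/-- Two scheduled paths collide if they meet at the same vertex at the same
time, or if they swap along an edge head-on. -/
def Collide (p q : ℕ → V) : Prop :=
  (∃ t, p t = q t) ∨ ∃ t, p t = q (t + 1) ∧ p (t + 1) = q t ∧ p t ≠ p (t + 1)

/-- The length of a scheduled path: the number of time steps at which it
actually moves. -/
noncomputable def pathLen (p : ℕ → V) : ℕ := Set.ncard {t | p t ≠ p (t + 1)}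

/-- A solution to the MPP instance `(G, R, xI, xG)`: a family of pairwise
non-colliding feasible paths, one per robot. -/
def IsSolution (G : SimpleGraph V) (xI xG : R → V) (p : R → ℕ → V) : Prop :=
  (∀ i, FeasiblePath G (xI i) (xG i) (p i)) ∧
    Pairwise fun i j => ¬ Collide (p i) (p j)

/-- `(G, xI, xG)` together with the robot index type `R` forms an MPP
instance: the graph is connected and the start and goal configurations are
injective. -/
def IsMPPInstance (G : SimpleGraph V) (xI xG : R → V) : Prop :=
  G.Connected ∧ Function.Injective xI ∧ Function.Injective xG

variable [Fintype R]

/-- Total arrival time of a solution. -/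
noncomputable def totalTime (xG : R → V) (p : R → ℕ → V) : ℕ :=
  ∑ i, arrivalTime (xG i) (p i)

/-- Makespan (last arrival time) of a solution. -/
noncomputable def makespan (xG : R → V) (p : R → ℕ → V) : ℕ :=
  Finset.univ.sup fun i => arrivalTime (xG i) (p i)

/-- Total distance traveled in a solution. -/
noncomputable def totalDist (p : R → ℕ → V) : ℕ := ∑ i, pathLen (p i)

/-- Maximum single-robot distance of a solution. -/
noncomputable def maxDist (p : R → ℕ → V) : ℕ :=
  Finset.univ.sup fun i => pathLen (p i)

/-- Minimum total arrival time over all solutions. -/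
noncomputable def minTotalTime (G : SimpleGraph V) (xI xG : R → V) : ℕ :=
  sInf {c | ∃ p, IsSolution G xI xG p ∧ totalTime xG p = c}

/-- Minimum makespan over all solutions. -/
noncomputable def minMakespan (G : SimpleGraph V) (xI xG : R → V) : ℕ :=
  sInf {c | ∃ p, IsSolution G xI xG p ∧ makespan xG p = c}

/-- Minimum total distance over all solutions. -/
noncomputable def minTotalDist (G : SimpleGraph V) (xI xG : R → V) : ℕ :=
  sInf {c | ∃ p, IsSolution G xI xG p ∧ totalDist p = c}

/-- Minimum maximum distance over all solutions. -/
noncomputable def minMaxDist (G : SimpleGraph V) (xI xG : R → V) : ℕ :=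
  sInf {c | ∃ p, IsSolution G xI xG p ∧ maxDist p = c}

end MPPFormal

/-!
The reduction from 3SAT to MPP.

A 3SAT instance over `n` variables with `m` clauses assigns to each clause
`j : Fin m` three literals; a literal is a pair `(i, b) : Fin n × Bool`,
`b = true` meaning the non-negated variable `x_i` and `b = false` the
negated literal `¬ x_i`.  The three literals of each clause involve three
distinct variables.
-/

namespace MPPFormal

/-- A 3SAT instance with variables `x_1, …, x_n` and clauses `c_1, …, c_m`. -/
structure ThreeSat (n m : ℕ) where
  lit : Fin m → Fin 3 → Fin n × Bool
  distinctVars : ∀ j (k k' : Fin 3), k ≠ k' → (lit j k).1 ≠ (lit j k').1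

/-- An assignment `a` satisfies the instance if every clause contains a true
literal. -/
def ThreeSat.SatisfiedBy {n m : ℕ} (sat : ThreeSat n m) (a : Fin n → Bool) : Prop :=
  ∀ j, ∃ k, a (sat.lit j k).1 = (sat.lit j k).2

/-- Satisfiability of a 3SAT instance. -/
def ThreeSat.Satisfiable {n m : ℕ} (sat : ThreeSat n m) : Prop :=
  ∃ a, sat.SatisfiedBy a

/-- Vertices of the MPP instance `Φ` reduced from a 3SAT instance with `n`
variables and `m` clauses:
* `vx i` is the left endpoint `v_{x_i}` of the `i`-th variable strip (start of
  the variable robot `r_{x_i}`);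
* `vxg i` is the right endpoint `v_{x_i}^g` (goal of `r_{x_i}`);
* `mid i side k` is the interior vertex of the `i`-th upper (`side = true`)
  or lower (`side = false`) path lying at distance `k + 1` from `vx i`
  (each of the two paths has length `m + 2`, hence `m + 1` interior
  vertices, `k : Fin (m+1)`);
* `vc j` is the start vertex `v_{c_j}` of the clause robot `r_{c_j}`;
* `vcg j` is its goal vertex `v_{c_j}^g`. -/
inductive PhiV (n m : ℕ) where
  | vx (i : Fin n)
  | vxg (i : Fin n)
  | mid (i : Fin n) (side : Bool) (k : Fin (m + 1))
  | vc (j : Fin m)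
  | vcg (j : Fin m)
deriving DecidableEq

/-- Base relation generating the edges of `Φ`:
the two length-`(m+2)` paths of each variable strip; an edge from `v_{c_j}`
to the vertex at distance `j + 1` (`1`-indexed: distance `j`) from `v_{x_i}`
on the upper (resp. lower) path of `x_i` for each non-negated (resp. negated)
literal of `c_j`; the path `v_{c_1}^g - ⋯ - v_{c_m}^g`; and edges from
`v_{c_m}^g` to every `v_{x_i}`. -/
def phiRel {n m : ℕ} (sat : ThreeSat n m) : PhiV n m → PhiV n m → Prop
  | PhiV.vx i, PhiV.mid i' _ k => i = i' ∧ (k : ℕ) = 0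
  | PhiV.mid i s k, PhiV.mid i' s' k' => i = i' ∧ s = s' ∧ (k' : ℕ) = (k : ℕ) + 1
  | PhiV.mid i _ k, PhiV.vxg i' => i = i' ∧ (k : ℕ) = m
  | PhiV.vc j, PhiV.mid i s k => (∃ l, sat.lit j l = (i, s)) ∧ (k : ℕ) = (j : ℕ)
  | PhiV.vcg j, PhiV.vcg j' => (j' : ℕ) = (j : ℕ) + 1
  | PhiV.vcg j, PhiV.vx _ => (j : ℕ) + 1 = m
  | _, _ => False

/-- The graph of the reduced MPP instance `Φ`. -/
def phiGraph {n m : ℕ} (sat : ThreeSat n m) : SimpleGraph (PhiV n m) :=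
  SimpleGraph.fromRel (phiRel sat)

/-- Start configuration of `Φ`: the variable robot `r_{x_i}` (index
`Sum.inl i`) starts at `v_{x_i}`; the clause robot `r_{c_j}` (index
`Sum.inr j`) starts at `v_{c_j}`. -/
def phiStart {n m : ℕ} : Fin n ⊕ Fin m → PhiV n m :=
  Sum.elim PhiV.vx PhiV.vc

/-- Goal configuration of `Φ`: `r_{x_i}` must reach `v_{x_i}^g` and `r_{c_j}`
must reach `v_{c_j}^g`. -/
def phiGoal {n m : ℕ} : Fin n ⊕ Fin m → PhiV n m :=
  Sum.elim PhiV.vxg PhiV.vcg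

end MPPFormal

namespace MPPFormal

/-- A solution of the two-group (interchangeable-robot) version `Φ'` of the
reduced instance: the variable robots form one group with goal set
`{v_{x_1}^g, …, v_{x_n}^g}` and the clause robots form another group with
goal set `{v_{c_1}^g, …, v_{c_m}^g}`.  `g` records the final goal vertex of
each robot: within each group the robots occupy all goal vertices of the
group, i.e. `g` is given by permutations of the two groups' goal sets, and
`p` is an ordinary (collision-free, feasible) solution for the goal
configuration `g`. -/
def TwoGroupSolution {n m : ℕ} (sat : ThreeSat n m)
    (p : Fin n ⊕ Fin m → ℕ → PhiV n m) (g : Fin n ⊕ Fin m → PhiV n m) : Prop :=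
  (∃ (φ : Equiv.Perm (Fin n)) (ψ : Equiv.Perm (Fin m)),
      g = Sum.elim (fun i => PhiV.vxg (φ i)) fun j => PhiV.vcg (ψ j)) ∧
    IsSolution (phiGraph sat) phiStart g p

end MPPFormal

namespace MPPFormal

/-!
Two potentials on the vertices, each growing by at most one along an edge, give lower bounds on
arrival times: a variable robot needs `m + 2` steps, and the clause robot `r_{c_j}` needs
`m + 2 + j - j'` steps if it ends at `v_{c_{j'}}^g`. Whatever the goal permutations, these bounds
add up to `(n + m)(m + 2)`, so a solution within that total time (in particular one of makespan
`m + 2`) is tight for every robot. Tightness forces each variable robot straight along one side of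
its strip, and each clause robot `r_{c_j}` into one of its literals' paths at distance `j + 1`
and back along it towards `v_{x_i}`; it would meet the variable robot head-on on the side that robot
took, so setting `x_i` to the side not taken satisfies every clause. Conversely, given a
satisfying assignment, the variable robots take the false side and each clause robot runs through a
true literal, passes `v_{x_i}` at time `j + 2` and then walks down the goal path.
-/

section General

variable {V : Type} {G : SimpleGraph V} {s g : V} {p : ℕ → V}

theorem apply_arrivalTime (h : ∃ t, p t = g) : p (arrivalTime g p) = g :=
  Nat.sInf_mem h

theorem arrivalTime_eq_of_forall_iff {T : ℕ} (h : ∀ t, p t = g ↔ T ≤ t) :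
    arrivalTime g p = T :=
  le_antisymm (Nat.sInf_le ((h T).2 le_rfl)) ((h _).1 (apply_arrivalTime ⟨T, (h T).2 le_rfl⟩))

theorem FeasiblePath.of_forall_iff {T : ℕ} (h0 : p 0 = s) (hg : ∀ t, p t = g ↔ T ≤ t)
    (hadj : ∀ t < T, G.Adj (p t) (p (t + 1))) : FeasiblePath G s g p := by
  refine ⟨h0, ⟨T, (hg T).2 le_rfl⟩, fun t ht => (hg t).2 ?_, fun t => ?_⟩
  · rwa [arrivalTime_eq_of_forall_iff hg] at ht
  · rcases lt_or_ge t T with ht | ht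
    · exact .inl (hadj t ht)
    · exact .inr (((hg t).2 ht).trans ((hg (t + 1)).2 (by omega)).symm)

theorem potential_le_add {f : V → ℤ} (hf : ∀ u v, G.Adj u v → f v ≤ f u + 1)
    (hp : ∀ t, G.Adj (p t) (p (t + 1)) ∨ p t = p (t + 1)) (a k : ℕ) :
    f (p (a + k)) ≤ f (p a) + k := by
  induction k with
  | zero => simp
  | succ k ih =>
    have hstep : f (p (a + k + 1)) ≤ f (p (a + k)) + 1 := by
      rcases hp (a + k) with h | h
      · exact hf _ _ h
      · rw [← h]; omega
    rw [← add_assoc]; push_cast; omega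

variable {f : V → ℤ}

theorem FeasiblePath.sub_le_arrivalTime (hp : FeasiblePath G s g p)
    (hf : ∀ u v, G.Adj u v → f v ≤ f u + 1) : f g - f s ≤ arrivalTime g p := by
  obtain ⟨h0, hex, -, hstep⟩ := hp
  have := potential_le_add hf hstep 0 (arrivalTime g p)
  rw [zero_add, apply_arrivalTime hex, h0] at this
  omega

theorem FeasiblePath.potential_eq_of_arrivalTime_le (hp : FeasiblePath G s g p)
    (hf : ∀ u v, G.Adj u v → f v ≤ f u + 1) (hT : (arrivalTime g p : ℤ) ≤ f g - f s)
    {t : ℕ}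
    (ht : t ≤ arrivalTime g p) : f (p t) = f s + t := by
  obtain ⟨h0, hex, -, hstep⟩ := hp
  have hup := potential_le_add hf hstep 0 t
  have hdown := potential_le_add hf hstep t (arrivalTime g p - t)
  rw [zero_add, h0] at hup
  rw [Nat.add_sub_cancel' ht, apply_arrivalTime hex] at hdown
  push_cast [ht] at hdown
  omega

theorem FeasiblePath.adj_of_arrivalTime_le (hp : FeasiblePath G s g p)
    (hf : ∀ u v, G.Adj u v → f v ≤ f u + 1) (hT : (arrivalTime g p : ℤ) ≤ f g - f s)
    {t : ℕ}
    (ht : t < arrivalTime g p) : G.Adj (p t) (p (t + 1)) := by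
  refine (hp.2.2.2 t).resolve_right fun h => ?_
  have h1 := hp.potential_eq_of_arrivalTime_le hf hT ht.le
  have h2 := hp.potential_eq_of_arrivalTime_le hf hT ht
  rw [← h] at h2
  push_cast at h2
  omega

theorem not_collide_of_forall_ne {q : ℕ → V}
    (h : ∀ t t', t ≤ t' + 1 → t' ≤ t + 1 → p t ≠ q t') : ¬Collide p q := by
  rintro (⟨t, ht⟩ | ⟨t, ht, -, -⟩)
  · exact h t t (by omega) (by omega) ht
  · exact h t (t + 1) (by omega) (by omega) ht

theorem not_collide_of_potential_eq {q : ℕ → V} {T : ℕ} {a b : ℤ} (hab : a ≠ b)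
    (hp : ∀ t, f (p t) = min t T - a) (hq : ∀ t, f (q t) = min t T - b) : ¬Collide p q := by
  rintro (⟨t, ht⟩ | ⟨t, h1, h2, -⟩)
  · have := hp t; rw [ht, hq] at this; omega
  · have e1 := hp t; have e2 := hp (t + 1)
    rw [h1, hq] at e1; rw [h2, hq] at e2
    omega

/-- Robots at `w t` and `w (c - t)` meet at time `c / 2` if `c` is even and swap across an
edge at time `(c - 1) / 2` otherwise. -/
theorem collide_of_opposite {q w : ℕ → V} {c : ℕ} (hc : 2 ≤ c)
    (hw : ∀ t, 0 < t → t + 1 < c → w t ≠ w (t + 1))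
    (hpq : ∀ t, 0 < t → t < c → p t = w t ∧ q t = w (c - t)) : Collide p q := by
  obtain ⟨k, rfl | rfl⟩ := Nat.even_or_odd' c
  · left
    refine ⟨k, ?_⟩
    rw [(hpq k (by omega) (by omega)).1, (hpq k (by omega) (by omega)).2]
    congr 1; omega
  · right
    refine ⟨k, ?_, ?_, ?_⟩
    · rw [(hpq k (by omega) (by omega)).1, (hpq (k + 1) (by omega) (by omega)).2]
      congr 1; omega
    · rw [(hpq k (by omega) (by omega)).2, (hpq (k + 1) (by omega) (by omega)).1]
      congr 1; omega
    · rw [(hpq k (by omega) (by omega)).1, (hpq (k + 1) (by omega) (by omega)).1]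
      exact hw k (by omega) (by omega)

theorem totalTime_le_card_mul_makespan {R : Type} [Fintype R] (xG : R → V) (p : R → ℕ → V) :
    totalTime xG p ≤ Fintype.card R * makespan xG p := by
  rw [totalTime, ← smul_eq_mul, ← Finset.card_univ]
  exact Finset.sum_le_card_nsmul _ _ _ fun r hr =>
    Finset.le_sup (f := fun r => arrivalTime (xG r) (p r)) hr

end General

section Reduction

variable {n m : ℕ} {sat : ThreeSat n m}

def varPotential : PhiV n m → ℤ
  | .vx _ => 0
  | .vxg _ => m + 2
  | .mid _ _ k => k + 1
  | .vc j => j + 1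
  | .vcg j => j - (m - 1)

def clausePotential : PhiV n m → ℤ
  | .vx _ => 2
  | .vxg _ => -m
  | .mid _ _ k => 1 - k
  | .vc j => -j
  | .vcg j => m + 2 - j

theorem varPotential_le_of_adj :
    ∀ u v : PhiV n m, (phiGraph sat).Adj u v → varPotential v ≤ varPotential u + 1 := by
  intro u v h
  obtain ⟨-, h | h⟩ := h <;> cases u <;> cases v <;>
    simp [phiRel, varPotential, -Fin.val_eq_zero_iff] at h ⊢ <;> omega

theorem clausePotential_le_of_adj :
    ∀ u v : PhiV n m, (phiGraph sat).Adj u v → clausePotential v ≤ clausePotential u + 1 := by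
  intro u v h
  obtain ⟨-, h | h⟩ := h <;> cases u <;> cases v <;>
    simp [phiRel, clausePotential, -Fin.val_eq_zero_iff] at h ⊢ <;> omega

/-- `strip i s d` is the vertex at distance `d` from `v_{x_i}` along the `i`-th upper
(`s = true`) or lower (`s = false`) path, stopping at `v_{x_i}^g`. -/
def strip (i : Fin n) (s : Bool) (d : ℕ) : PhiV n m :=
  if d = 0 then .vx i else if h : d ≤ m + 1 then .mid i s ⟨d - 1, by omega⟩ else .vxg i

theorem strip_zero (i : Fin n) (s : Bool) : strip (m := m) i s 0 = .vx i := rfl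

theorem strip_eq_mid {i : Fin n} {s : Bool} {d : ℕ} (h0 : 0 < d) (hd : d ≤ m + 1) :
    strip (m := m) i s d = .mid i s ⟨d - 1, by omega⟩ := by
  simp [strip, h0.ne', hd]

theorem strip_eq_vxg_iff {i : Fin n} {s : Bool} {d : ℕ} :
    strip (m := m) i s d = .vxg i ↔ m + 2 ≤ d := by
  unfold strip; split_ifs <;> simp <;> omega

theorem varPotential_strip (i : Fin n) (s : Bool) (d : ℕ) :
    varPotential (strip (m := m) i s d) = min d (m + 2) := by
  unfold strip; split_ifs <;> simp [varPotential] <;> omega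

theorem clausePotential_strip (i : Fin n) (s : Bool) (d : ℕ) :
    clausePotential (strip (m := m) i s d) = 2 - min d (m + 2) := by
  unfold strip; split_ifs <;> simp [clausePotential] <;> omega

theorem strip_adj_succ (i : Fin n) (s : Bool) {d : ℕ} (hd : d ≤ m + 1) :
    (phiGraph sat).Adj (strip i s d) (strip i s (d + 1)) := by
  refine ⟨fun h => ?_, .inl ?_⟩
  · have := congrArg varPotential h
    simp only [varPotential_strip] at this
    omega
  · unfold strip; split_ifs <;> simp [phiRel] <;> omega

theorem strip_ne_strip {i i' : Fin n} (h : i ≠ i') (s s' : Bool) (d d' : ℕ) :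
    strip (m := m) i s d ≠ strip i' s' d' := by
  unfold strip; split_ifs <;> simp [h]

theorem eq_strip_of_adj_vx {i : Fin n} {w : PhiV n m} (h : (phiGraph sat).Adj (.vx i) w)
    (hw : varPotential w = 1) : ∃ s, w = strip i s 1 := by
  simp only [strip_eq_mid one_pos (by omega : 1 ≤ m + 1)]
  obtain ⟨-, h | h⟩ := h <;> cases w <;> simp only [varPotential] at hw <;>
    simp [phiRel, Fin.ext_iff, -Fin.val_eq_zero_iff] at h ⊢ <;> omega

theorem eq_strip_succ_of_adj_strip {i : Fin n} {s : Bool} {d : ℕ} {w : PhiV n m}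
    (h : (phiGraph sat).Adj (strip i s d) w) (h0 : 0 < d) (hd : d ≤ m + 1)
    (hw : varPotential w = d + 1) : w = strip i s (d + 1) := by
  rw [strip_eq_mid h0 hd] at h
  unfold strip
  obtain ⟨-, h | h⟩ := h <;> cases w <;> simp only [varPotential] at hw <;> split_ifs <;>
    simp [phiRel, Fin.ext_iff, -Fin.val_eq_zero_iff] at h ⊢ <;>
    first | omega | (obtain ⟨_, rfl, _⟩ := h; exact ⟨by omega, rfl, by omega⟩)

theorem eq_strip_of_adj_vc {j : Fin m} {w : PhiV n m} (h : (phiGraph sat).Adj (.vc j) w) :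
    ∃ l, w = strip (sat.lit j l).1 (sat.lit j l).2 (j + 1) := by
  simp only [strip_eq_mid (Nat.succ_pos _) (by omega : (j : ℕ) + 1 ≤ m + 1)]
  obtain ⟨-, h | h⟩ := h <;> cases w <;>
    simp [phiRel, Fin.ext_iff, -Fin.val_eq_zero_iff] at h ⊢
  obtain ⟨⟨l, hl⟩, hk⟩ := h
  exact ⟨l, by simp [hl, hk]⟩

theorem eq_strip_pred_of_adj_strip {i : Fin n} {s : Bool} {d : ℕ} {w : PhiV n m}
    (h : (phiGraph sat).Adj (strip i s d) w) (h0 : 2 ≤ d) (hd : d ≤ m + 1)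
    (hw : clausePotential w = 3 - d) : w = strip i s (d - 1) := by
  rw [strip_eq_mid (by omega) hd] at h
  rw [strip_eq_mid (by omega) (by omega)]
  obtain ⟨-, h | h⟩ := h <;> cases w <;> simp only [clausePotential] at hw <;>
    simp [phiRel, Fin.ext_iff, -Fin.val_eq_zero_iff] at h ⊢ <;>
    first | omega | (obtain ⟨_, rfl, _⟩ := h; exact ⟨by omega, rfl, by omega⟩)

theorem FeasiblePath.exists_eq_strip_of_start_vx {i i' : Fin n} {p : ℕ → PhiV n m}
    (hp : FeasiblePath (phiGraph sat) (.vx i) (.vxg i') p)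
    (hT : arrivalTime (.vxg i') p ≤ m + 2) : ∃ s, ∀ t ≤ m + 2, p t = strip i s t := by
  have hT' : (arrivalTime (.vxg i') p : ℤ) ≤
      varPotential (m := m) (.vxg i') - varPotential (m := m) (.vx i) := by
    simp only [varPotential]; omega
  have hlow := hp.sub_le_arrivalTime varPotential_le_of_adj
  simp only [varPotential] at hlow
  have hpot : ∀ t ≤ m + 2, varPotential (p t) = t := fun t ht => by
    simpa [varPotential] using
      hp.potential_eq_of_arrivalTime_le varPotential_le_of_adj hT' (by omega)
  have hadj : ∀ t < m + 2, (phiGraph sat).Adj (p t) (p (t + 1)) := fun t ht =>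
    hp.adj_of_arrivalTime_le varPotential_le_of_adj hT' (by omega)
  obtain ⟨s, hs⟩ := eq_strip_of_adj_vx (hp.1 ▸ hadj 0 (by omega)) (hpot 1 (by omega))
  refine ⟨s, fun t ht => ?_⟩
  induction t with
  | zero => exact hp.1
  | succ t ih =>
    rcases Nat.eq_zero_or_pos t with rfl | ht0
    · exact hs
    · exact eq_strip_succ_of_adj_strip (ih (by omega) ▸ hadj t (by omega)) ht0 (by omega)
        (by rw [hpot _ ht]; push_cast; rfl)

theorem FeasiblePath.exists_eq_strip_of_start_vc {j j' : Fin m} {p : ℕ → PhiV n m}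
    (hp : FeasiblePath (phiGraph sat) (.vc j) (.vcg j') p)
    (hT : (arrivalTime (.vcg j') p : ℤ) ≤ m + 2 + j - j') :
    ∃ l, ∀ t : ℕ, 0 < t → t ≤ j + 1 →
      p t = strip (sat.lit j l).1 (sat.lit j l).2 (j + 2 - t) := by
  have hT' : (arrivalTime (.vcg j') p : ℤ) ≤
      clausePotential (n := n) (.vcg j') - clausePotential (n := n) (.vc j) := by
    simp only [clausePotential]; omega
  have hlow := hp.sub_le_arrivalTime clausePotential_le_of_adj
  simp only [clausePotential] at hlow
  have hj' := j'.isLt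
  have hpot : ∀ t : ℕ, t ≤ j + 1 → clausePotential (p t) = t - j := fun t ht => by
    rw [hp.potential_eq_of_arrivalTime_le clausePotential_le_of_adj hT' (by omega)]
    simp only [clausePotential]; ring
  have hadj : ∀ t : ℕ, t ≤ j → (phiGraph sat).Adj (p t) (p (t + 1)) := fun t ht =>
    hp.adj_of_arrivalTime_le clausePotential_le_of_adj hT' (by omega)
  obtain ⟨l, hl⟩ := eq_strip_of_adj_vc (hp.1 ▸ hadj 0 (by omega))
  refine ⟨l, fun t ht0 ht => ?_⟩
  induction t with
  | zero => omega
  | succ t ih =>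
    rcases Nat.eq_zero_or_pos t with rfl | ht0
    · simpa using hl
    · rw [show j + 2 - (t + 1) = j + 2 - t - 1 by omega]
      exact eq_strip_pred_of_adj_strip (ih ht0 (by omega) ▸ hadj t (by omega)) (by omega)
        (by omega) (by rw [hpot _ ht]; push_cast; omega)

/-- A clause robot running back along the side taken by its variable robot meets it head-on. -/
theorem satisfiedBy_of_not_collide {p : Fin n ⊕ Fin m → ℕ → PhiV n m}
    (hcol : Pairwise fun r r' => ¬Collide (p r) (p r')) (side : Fin n → Bool)
    (hvar : ∀ i, ∀ t ≤ m + 2, p (.inl i) t = strip i (side i) t)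
    (hcl : ∀ j : Fin m, ∃ l, ∀ t : ℕ, 0 < t → t ≤ j + 1 →
      p (.inr j) t = strip (sat.lit j l).1 (sat.lit j l).2 (j + 2 - t)) :
    sat.SatisfiedBy fun i => !side i := by
  intro j
  obtain ⟨l, hl⟩ := hcl j
  refine ⟨l, by_contra fun hfalse => hcol (Sum.inl_ne_inr (a := (sat.lit j l).1) (b := j)) ?_⟩
  have hside : side (sat.lit j l).1 = (sat.lit j l).2 := by simpa using hfalse
  have hj := j.isLt
  refine collide_of_opposite (w := strip (sat.lit j l).1 (sat.lit j l).2) (c := j + 2) (by omega)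
    (fun t _ ht => (strip_adj_succ (sat := sat) _ _ (by omega)).ne)
    fun t h0 ht => ⟨?_, hl t h0 (by omega)⟩
  rw [hvar _ t (by omega), hside]

theorem satisfiable_of_totalTime_le {p : Fin n ⊕ Fin m → ℕ → PhiV n m}
    {g : Fin n ⊕ Fin m → PhiV n m} (hp : TwoGroupSolution sat p g)
    (h : totalTime g p ≤ (n + m) * (m + 2)) : sat.Satisfiable := by
  obtain ⟨⟨φ, ψ, rfl⟩, hfeas, hcol⟩ := hp
  let L : Fin n ⊕ Fin m → ℤ := Sum.elim (fun _ => m + 2) fun j => m + 2 + j - ψ j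
  have hL : ∀ r ∈ Finset.univ, L r ≤
      arrivalTime (Sum.elim (fun i => .vxg (φ i)) (fun j => .vcg (ψ j)) r) (p r) := by
    rintro (i | j) -
    · simpa [L, phiStart, varPotential] using
        (hfeas (.inl i)).sub_le_arrivalTime varPotential_le_of_adj
    · have := (hfeas (.inr j)).sub_le_arrivalTime clausePotential_le_of_adj
      simp only [phiStart, Sum.elim_inr, clausePotential] at this
      simp only [L, Sum.elim_inr]; omega
  have hsumL : ∑ r, L r = (n + m) * (m + 2) := by
    simp only [L, Fintype.sum_sum_type, Sum.elim_inl, Sum.elim_inr, Finset.sum_sub_distrib,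
      Finset.sum_add_distrib, Equiv.sum_comp ψ (fun j => ((j : ℕ) : ℤ)), Finset.sum_const,
      Finset.card_univ, Fintype.card_fin, nsmul_eq_mul]
    ring
  have htight := (Finset.sum_eq_sum_iff_of_le hL).1 <| le_antisymm (Finset.sum_le_sum hL) <| by
    rw [hsumL]; exact_mod_cast h
  choose side hside using fun i => (hfeas (.inl i)).exists_eq_strip_of_start_vx
    (by have := htight (.inl i) (Finset.mem_univ _); simp [L] at this; omega)
  exact ⟨_, satisfiedBy_of_not_collide hcol side hside fun j =>
    (hfeas (.inr j)).exists_eq_strip_of_start_vc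
      (by have := htight (.inr j) (Finset.mem_univ _); simp [L] at this; omega)⟩

def clausePath (j : Fin m) (i : Fin n) (s : Bool) (t : ℕ) : PhiV n m :=
  if t = 0 then .vc j
  else if h : t ≤ j + 2 then strip i s (j + 2 - t)
  else .vcg ⟨j + (m + 2 - t), by have := j.isLt; omega⟩

theorem clausePath_zero (j : Fin m) (i : Fin n) (s : Bool) : clausePath j i s 0 = .vc j := rfl

theorem clausePath_of_le {j : Fin m} {i : Fin n} {s : Bool} {t : ℕ} (h0 : 0 < t)
    (ht : t ≤ j + 2) : clausePath j i s t = strip i s (j + 2 - t) := by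
  simp [clausePath, h0.ne', ht]

theorem clausePath_of_lt {j : Fin m} {i : Fin n} {s : Bool} {t : ℕ} (ht : j + 2 < t) :
    clausePath j i s t = .vcg ⟨j + (m + 2 - t), by have := j.isLt; omega⟩ := by
  simp [clausePath, show t ≠ 0 by omega, show ¬t ≤ j + 2 by omega]

theorem clausePath_eq_vcg_iff {j : Fin m} {i : Fin n} {s : Bool} {t : ℕ} :
    clausePath j i s t = .vcg j ↔ m + 2 ≤ t := by
  unfold clausePath strip; split_ifs <;> simp [Fin.ext_iff] <;> omega

theorem clausePotential_clausePath (j : Fin m) (i : Fin n) (s : Bool) (t : ℕ) :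
    clausePotential (clausePath j i s t) = min t (m + 2) - j := by
  have := j.isLt
  unfold clausePath
  split_ifs <;> (try rw [clausePotential_strip]) <;> (try simp only [clausePotential]) <;> omega

theorem clausePath_adj_succ {j : Fin m} {i : Fin n} {s : Bool}
    (hlit : ∃ l, sat.lit j l = (i, s)) {t : ℕ} (ht : t < m + 2) :
    (phiGraph sat).Adj (clausePath j i s t) (clausePath j i s (t + 1)) := by
  have hj := j.isLt
  obtain rfl | ht0 := Nat.eq_zero_or_pos t
  · rw [zero_add, clausePath_zero, clausePath_of_le one_pos (by omega),
      strip_eq_mid (by omega) (by omega)]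
    exact ⟨by simp, .inl ⟨hlit, by simp⟩⟩
  obtain ht1 | rfl | ht2 := lt_trichotomy t (j + 2)
  · rw [clausePath_of_le ht0 ht1.le, clausePath_of_le (by omega) ht1,
      show j + 2 - t = j + 2 - (t + 1) + 1 by omega]
    exact (strip_adj_succ i s (by omega)).symm
  · rw [clausePath_of_le ht0 le_rfl, clausePath_of_lt (by omega), Nat.sub_self, strip_zero]
    exact ⟨by simp, .inr (by simp [phiRel]; omega)⟩
  · rw [clausePath_of_lt ht2, clausePath_of_lt (by omega)]
    exact ⟨by simp; omega, .inr (by simp [phiRel]; omega)⟩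

theorem strip_ne_clausePath {i i' : Fin n} {s s' : Bool} (hs : i = i' → s ≠ s') (j : Fin m)
    {t t' : ℕ} (ht : t ≤ t' + 1) (ht' : t' ≤ t + 1) :
    strip i s t ≠ clausePath j i' s' t' := by
  have hj := j.isLt
  unfold clausePath strip
  split_ifs <;> simp [Fin.ext_iff] <;>
    first | omega | exact fun hi hs' => absurd hs' (hs (Fin.ext hi))

theorem exists_twoGroupSolution_of_satisfiedBy {a : Fin n → Bool} (ha : sat.SatisfiedBy a) :
    ∃ p, TwoGroupSolution sat p phiGoal ∧ makespan phiGoal p ≤ m + 2 := by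
  choose l hl using ha
  set lit := fun j => sat.lit j (l j)
  -- each variable robot takes the side of its false literal, leaving the true side to the clauses
  let p : Fin n ⊕ Fin m → ℕ → PhiV n m :=
    Sum.elim (fun i => strip i (!a i)) fun j => clausePath j (lit j).1 (lit j).2
  have hgoal : ∀ r t, p r t = phiGoal r ↔ m + 2 ≤ t := by
    rintro (i | j) t
    · exact strip_eq_vxg_iff
    · exact clausePath_eq_vcg_iff
  refine ⟨p, ⟨⟨1, 1, rfl⟩, fun r => ?_, ?_⟩, Finset.sup_le fun r _ =>
    (arrivalTime_eq_of_forall_iff (hgoal r)).le⟩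
  · refine FeasiblePath.of_forall_iff (by cases r <;> rfl) (hgoal r) fun t ht => ?_
    rcases r with i | j
    · exact strip_adj_succ i _ (by omega)
    · exact clausePath_adj_succ ⟨l j, rfl⟩ ht
  · have hside : ∀ i j, i = (lit j).1 → (!a i) ≠ (lit j).2 := by
      rintro i j rfl; simp [lit, ← hl j]
    rintro (i | j) (i' | j') hne
    · exact not_collide_of_forall_ne fun t t' _ _ =>
        strip_ne_strip (fun h => hne (congrArg _ h)) _ _ _ _
    · exact not_collide_of_forall_ne fun t t' ht ht' =>
        strip_ne_clausePath (hside i j') j' ht ht'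
    · exact not_collide_of_forall_ne fun t t' ht ht' =>
        (strip_ne_clausePath (hside i' j) j ht' ht).symm
    · exact not_collide_of_potential_eq
        (fun h => hne (congrArg _ (Fin.ext (by exact_mod_cast h))))
        (clausePotential_clausePath _ _ _) (clausePotential_clausePath _ _ _)

end Reduction

theorem twoGroup_optimal_iff_satisfiable_general {n m : ℕ}
    (sat : ThreeSat n m) :
    ((∃ (p : Fin n ⊕ Fin m → ℕ → PhiV n m) (g : Fin n ⊕ Fin m → PhiV n m),
        TwoGroupSolution sat p g ∧ makespan g p ≤ m + 2) ↔ sat.Satisfiable) ∧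
    ((∃ (p : Fin n ⊕ Fin m → ℕ → PhiV n m) (g : Fin n ⊕ Fin m → PhiV n m),
        TwoGroupSolution sat p g ∧ totalTime g p ≤ (n + m) * (m + 2)) ↔
      sat.Satisfiable) := by
  have htotal : ∀ (p : Fin n ⊕ Fin m → ℕ → PhiV n m) g,
      makespan g p ≤ m + 2 → totalTime g p ≤ (n + m) * (m + 2) := fun p g h =>
    (totalTime_le_card_mul_makespan g p).trans <| by
      simpa using Nat.mul_le_mul_left (n + m) h
  have hsolve :
      sat.Satisfiable → ∃ p g, TwoGroupSolution sat p g ∧ makespan g p ≤ m + 2 := by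
    rintro ⟨a, ha⟩
    obtain ⟨p, hp⟩ := exists_twoGroupSolution_of_satisfiedBy ha
    exact ⟨p, phiGoal, hp⟩
  refine ⟨⟨fun ⟨p, g, hpg, h⟩ => satisfiable_of_totalTime_le hpg (htotal p g h), hsolve⟩,
    ⟨fun ⟨p, g, hpg, h⟩ => satisfiable_of_totalTime_le hpg h, fun hs => ?_⟩⟩
  obtain ⟨p, g, hpg, h⟩ := hsolve hs
  exact ⟨p, g, hpg, htotal p g h⟩

/-- The two-group (interchangeable-robot) version `Φ'` of the reduced MPP
instance admits a solution with makespan at most `m + 2` if and only if the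
3SAT instance is satisfiable, and it admits a solution with total arrival
time at most `(n + m)(m + 2)` if and only if the 3SAT instance is
satisfiable. -/
theorem twoGroup_optimal_iff_satisfiable {n m : ℕ} (hm : 0 < m)
    (sat : ThreeSat n m) :
    ((∃ (p : Fin n ⊕ Fin m → ℕ → PhiV n m) (g : Fin n ⊕ Fin m → PhiV n m),
        TwoGroupSolution sat p g ∧ makespan g p ≤ m + 2) ↔ sat.Satisfiable) ∧
    ((∃ (p : Fin n ⊕ Fin m → ℕ → PhiV n m) (g : Fin n ⊕ Fin m → PhiV n m),
        TwoGroupSolution sat p g ∧ totalTime g p ≤ (n + m) * (m + 2)) ↔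
      sat.Satisfiable) :=
  twoGroup_optimal_iff_satisfiable_general sat

end MPPFormal
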